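/- Let R be a finite non-commutative ring of odd order n with Z(R) = {0} and 3 ∤ n. Then 3 < γ(Γ(R)) < (n-1)/2. -/

import Mathlib

/-!
The centralizers of the vertices of a dominating set `D` of `Γ(R)` are additive subgroups
covering `R`, so by B. H. Neumann's lemma one of them has index at most `|D|`. This index
divides `n`, which is prime to `6`; hence `|D| ≤ 3` would make the index `1`, i.e. a vertex
central. Conversely, since `Z(R) = 0` every nonzero element is a vertex, and since `n` is odd
the nonzero elements fall into pairs `{y, -y}`. A non-central `x` dominates its cyclic subgroup
`⟨x⟩`, of order `d ≥ 5`, and one element from each pair outside `⟨x⟩` dominates the rest,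
giving a dominating set of size `1 + (n - d) / 2`.
-/

open scoped Classical

noncomputable section

/-- The commuting graph of a (non-unital, possibly non-commutative) ring `R`:
vertices are the non-central elements, and two distinct vertices are adjacent
iff they commute. -/
def commutingGraph (R : Type*) [NonUnitalRing R] :
    SimpleGraph {x : R // x ∉ Set.center R} where
  Adj a b := a ≠ b ∧ (a : R) * b = (b : R) * a
  symm := ⟨by rintro a b ⟨h1, h2⟩; exact ⟨h1.symm, h2.symm⟩⟩
  loopless := ⟨by rintro a ⟨h, -⟩; exact h rfl⟩

/-- A dominating set: every vertex not in `D` is adjacent to some vertex of `D`. -/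
def SimpleGraph.IsDominatingSet {V : Type*} (G : SimpleGraph V) (D : Finset V) : Prop :=
  ∀ v, v ∉ D → ∃ u ∈ D, G.Adj u v

/-- The domination number: the minimum cardinality of a dominating set. -/
noncomputable def SimpleGraph.dominationNumber {V : Type*} [Fintype V] (G : SimpleGraph V) : ℕ :=
  sInf {n | ∃ D : Finset V, G.IsDominatingSet D ∧ D.card = n}

/-- The signed domination number: the minimum total weight of a function
`f : V → {-1, 1}` whose sum over every closed neighbourhood is at least `1`. -/
noncomputable def SimpleGraph.signedDominationNumber {V : Type*} [Fintype V]
    (G : SimpleGraph V) : ℤ :=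
  sInf {w : ℤ | ∃ f : V → ℤ, (∀ v, f v = 1 ∨ f v = -1) ∧
    (∀ v : V, 1 ≤ ∑ u ∈ Finset.univ.filter (fun u => G.Adj v u ∨ u = v), f u) ∧
    w = ∑ v, f v}

/-- Underlying type of the ring `E`. -/
def Ering : Type := ZMod 2 × ZMod 2

instance : Fintype Ering := inferInstanceAs (Fintype (ZMod 2 × ZMod 2))
instance : DecidableEq Ering := inferInstanceAs (DecidableEq (ZMod 2 × ZMod 2))
instance : AddCommGroup Ering := inferInstanceAs (AddCommGroup (ZMod 2 × ZMod 2))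
instance : Mul Ering := ⟨fun a b => (b.1 * a.1, b.1 * a.2)⟩

/-- `E = ⟨x,y : 2x=2y=0, x²=x, y²=y, xy=x, yx=y⟩`, realized on `ZMod 2 × ZMod 2`
with `x = (1,0)`, `y = (1,1)` and multiplication `a * b = (b₁a₁, b₁a₂)`. -/
instance : NonUnitalRing Ering :=
  { (inferInstance : AddCommGroup Ering), (inferInstance : Mul Ering) with
    left_distrib := by decide
    right_distrib := by decide
    zero_mul := by decide
    mul_zero := by decide
    mul_assoc := by decide }

/-- Underlying type of the ring `F`. -/
def Fring : Type := ZMod 2 × ZMod 2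

instance : Fintype Fring := inferInstanceAs (Fintype (ZMod 2 × ZMod 2))
instance : DecidableEq Fring := inferInstanceAs (DecidableEq (ZMod 2 × ZMod 2))
instance : AddCommGroup Fring := inferInstanceAs (AddCommGroup (ZMod 2 × ZMod 2))
instance : Mul Fring := ⟨fun a b => (a.1 * b.1, a.1 * b.2)⟩

/-- `F = ⟨x,y : 2x=2y=0, x²=x, y²=y, xy=y, yx=x⟩`, realized on `ZMod 2 × ZMod 2`
with `x = (1,0)`, `y = (1,1)` and multiplication `a * b = (a₁b₁, a₁b₂)`. -/
instance : NonUnitalRing Fring :=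
  { (inferInstance : AddCommGroup Fring), (inferInstance : Mul Fring) with
    left_distrib := by decide
    right_distrib := by decide
    zero_mul := by decide
    mul_zero := by decide
    mul_assoc := by decide }


open Finset
open scoped Pointwise

lemma Finset.exists_transversal_of_involutive {α : Type*} [DecidableEq α] {f : α → α}
    (hf : Function.Involutive f) (S : Finset α) (hS : ∀ a ∈ S, f a ∈ S)
    (hfix : ∀ a ∈ S, f a ≠ a) :
    ∃ T ⊆ S, 2 * #T = #S ∧ ∀ a ∈ S, a ∈ T ∨ f a ∈ T := by
  induction S using Finset.strongInduction with
  | H S ih =>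
  obtain rfl | ⟨a, ha⟩ := S.eq_empty_or_nonempty
  · exact ⟨∅, subset_refl _, by simp, by simp⟩
  have hfa : f a ∈ S.erase a := mem_erase.mpr ⟨hfix a ha, hS a ha⟩
  set S' := (S.erase a).erase (f a)
  have hS'S : S' ⊂ S := (erase_ssubset hfa).trans (erase_ssubset ha)
  have hmemS' : ∀ {b}, b ∈ S' ↔ b ≠ f a ∧ b ≠ a ∧ b ∈ S := by simp [S']
  obtain ⟨T, hTS', hcard, hcover⟩ := ih S' hS'S
    (fun b hb => by
      obtain ⟨h1, h2, h3⟩ := hmemS'.mp hb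
      exact hmemS'.mpr ⟨fun h => h2 (hf.injective h), fun h => h1 (by rw [← h, hf]),
        hS b h3⟩)
    (fun b hb => hfix b (hS'S.subset hb))
  have haT : a ∉ T := fun h => (hmemS'.mp (hTS' h)).2.1 rfl
  refine ⟨insert a T, insert_subset ha (hTS'.trans hS'S.subset), ?_, fun b hb => ?_⟩
  · rw [card_insert_of_notMem haT, ← card_erase_add_one ha, ← card_erase_add_one hfa]
    change 2 * (#T + 1) = #S' + 1 + 1
    omega
  · by_cases hba : b = a
    · exact .inl (hba ▸ mem_insert_self _ _)
    by_cases hbfa : b = f a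
    · exact .inr (by rw [hbfa, hf]; exact mem_insert_self _ _)
    rcases hcover b (hmemS'.mpr ⟨hbfa, hba, hb⟩) with h | h
    · exact .inl (mem_insert_of_mem h)
    · exact .inr (mem_insert_of_mem h)

section OddOrder

variable {G : Type*} [AddGroup G] [Fintype G]

lemma neg_ne_self_of_odd_card (hodd : Odd (Fintype.card G)) {y : G} (hy : y ≠ 0) : -y ≠ y := by
  intro h
  have h2 : addOrderOf y ∣ 2 := addOrderOf_dvd_of_nsmul_eq_zero (by
    rw [two_nsmul]; nth_rewrite 1 [← h]; exact neg_add_cancel y)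
  have hodd' : Odd (addOrderOf y) := hodd.of_dvd_nat addOrderOf_dvd_card
  rcases (Nat.dvd_prime Nat.prime_two).mp h2 with h1 | h1
  · exact hy (AddMonoid.addOrderOf_eq_one_iff.mp h1)
  · rw [h1] at hodd'; exact Nat.not_odd_iff_even.mpr even_two hodd'

lemma five_le_addOrderOf (hodd : Odd (Fintype.card G)) (h3 : ¬ 3 ∣ Fintype.card G) {x : G}
    (hx : x ≠ 0) : 5 ≤ addOrderOf x := by
  have hdvd : addOrderOf x ∣ Fintype.card G := addOrderOf_dvd_card
  have hodd' : addOrderOf x % 2 = 1 := Nat.odd_iff.mp (hodd.of_dvd_nat hdvd)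
  have hne1 : addOrderOf x ≠ 1 := mt AddMonoid.addOrderOf_eq_one_iff.mp hx
  have hne3 : addOrderOf x ≠ 3 := fun h => h3 (h ▸ hdvd)
  have hpos : 0 < addOrderOf x := addOrderOf_pos x
  omega

end OddOrder

namespace SimpleGraph

variable {V : Type*}

lemma IsDominatingSet.nonempty {G : SimpleGraph V} [Nonempty V] {D : Finset V}
    (hD : G.IsDominatingSet D) :
    D.Nonempty := by
  by_contra h
  obtain ⟨u, hu, -⟩ := hD (Classical.arbitrary V) (by simp_all)
  exact h ⟨u, hu⟩

variable [Fintype V] (G : SimpleGraph V)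

lemma isDominatingSet_univ : G.IsDominatingSet univ := fun v hv => absurd (mem_univ v) hv

lemma dominationNumber_le {D : Finset V} (hD : G.IsDominatingSet D) :
    G.dominationNumber ≤ #D :=
  Nat.sInf_le ⟨D, hD, rfl⟩

lemma le_dominationNumber {k : ℕ} (h : ∀ D, G.IsDominatingSet D → k ≤ #D) :
    k ≤ G.dominationNumber :=
  le_csInf ⟨_, univ, G.isDominatingSet_univ, rfl⟩ (by rintro _ ⟨D, hD, rfl⟩; exact h D hD)

end SimpleGraph

section CommutingGraph

variable {R : Type*} [NonUnitalRing R]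

lemma exists_mem_centralizer_of_isDominatingSet {D : Finset {x : R // x ∉ Set.center R}}
    (hD : (commutingGraph R).IsDominatingSet D) (hne : D.Nonempty) (y : R) :
    ∃ u ∈ D, y ∈ NonUnitalSubring.centralizer {(u : R)} := by
  by_cases hy : y ∈ Set.center R
  · obtain ⟨u, hu⟩ := hne
    exact ⟨u, hu, NonUnitalSubring.center_le_centralizer _ hy⟩
  by_cases hyD : ⟨y, hy⟩ ∈ D
  · exact ⟨⟨y, hy⟩, hyD, by simp [NonUnitalSubring.mem_centralizer_iff]⟩
  obtain ⟨u, hu, -, hcomm⟩ := hD ⟨y, hy⟩ hyD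
  exact ⟨u, hu, by simpa [NonUnitalSubring.mem_centralizer_iff] using hcomm⟩

variable [Fintype R]

lemma four_le_card_of_isDominatingSet (hodd : Odd (Fintype.card R))
    (h3 : ¬ 3 ∣ Fintype.card R) {x : R} (hx : x ∉ Set.center R)
    {D : Finset {x : R // x ∉ Set.center R}} (hD : (commutingGraph R).IsDominatingSet D) :
    4 ≤ #D := by
  have : Nonempty {x : R // x ∉ Set.center R} := ⟨⟨x, hx⟩⟩
  set H : {x : R // x ∉ Set.center R} → AddSubgroup R :=
    fun u => (NonUnitalSubring.centralizer {(u : R)}).toAddSubgroup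
  have hcover : ⋃ u ∈ D, (0 : R) +ᵥ (H u : Set R) = Set.univ := by
    refine Set.eq_univ_of_forall fun y => ?_
    obtain ⟨u, hu, hy⟩ := exists_mem_centralizer_of_isDominatingSet hD hD.nonempty y
    exact Set.mem_biUnion hu (by rw [zero_vadd]; exact hy)
  obtain ⟨u, -, -, hind⟩ := AddSubgroup.exists_index_le_card_of_leftCoset_cover hcover
  by_contra! hcard
  have hdvd : (H u).index ∣ Fintype.card R :=
    Nat.card_eq_fintype_card (α := R) ▸ (H u).index_dvd_card
  have hind1 : (H u).index = 1 := by
    have hpos : 0 < (H u).index := Nat.pos_of_dvd_of_pos hdvd Fintype.card_pos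
    have hle : (H u).index ≤ 3 := by omega
    interval_cases h : (H u).index
    · rfl
    · exact absurd (hodd.of_dvd_nat hdvd) (by decide)
    · exact absurd hdvd h3
  refine u.2 (Semigroup.mem_center_iff.mpr fun g => ?_)
  have hg : g ∈ H u := (AddSubgroup.index_eq_one.mp hind1) ▸ AddSubgroup.mem_top g
  exact (NonUnitalSubring.mem_centralizer_iff.mp hg u rfl).symm

lemma exists_isDominatingSet_two_mul_card_add_addOrderOf_le (hodd : Odd (Fintype.card R))
    (hz : Set.center R = {0}) {x : R} (hx : x ∉ Set.center R) :
    ∃ D, (commutingGraph R).IsDominatingSet D ∧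
      2 * #D + addOrderOf x ≤ Fintype.card R + 2 := by
  have hcenter : ∀ {y : R}, y ∉ Set.center R ↔ y ≠ 0 := by simp [hz]
  set Z := AddSubgroup.zmultiples x
  set S := univ.filter (· ∉ Z)
  have hSZ : #S + addOrderOf x = Fintype.card R := by
    rw [← Fintype.card_zmultiples, Fintype.card_subtype, add_comm,
      card_filter_add_card_filter_not, card_univ]
  obtain ⟨T, hTS, hTcard, hTcover⟩ := exists_transversal_of_involutive neg_involutive S
    (fun y hy => by simpa [S] using hy)
    (fun y hy => neg_ne_self_of_odd_card hodd fun h => (mem_filter.mp hy).2 (h ▸ Z.zero_mem))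
  have hTcenter : ∀ y ∈ T, y ∉ Set.center R := fun y hy =>
    hcenter.mpr fun h => (mem_filter.mp (hTS hy)).2 (h ▸ Z.zero_mem)
  refine ⟨(insert x T).subtype (· ∉ Set.center R), fun v hv => ?_, ?_⟩
  · rw [mem_subtype, mem_insert, not_or] at hv
    by_cases hvZ : (v : R) ∈ Z
    · refine ⟨⟨x, hx⟩, by simp, fun h => hv.1 (congrArg Subtype.val h).symm, ?_⟩
      obtain ⟨k, hk⟩ := AddSubgroup.mem_zmultiples_iff.mp hvZ
      rw [← hk, mul_smul_comm, smul_mul_assoc]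
    · have hnegT : -(v : R) ∈ T :=
        (hTcover v (mem_filter.mpr ⟨mem_univ _, hvZ⟩)).resolve_left hv.2
      refine ⟨⟨-v, hTcenter _ hnegT⟩, by simp [hnegT], fun h => ?_, by simp⟩
      exact neg_ne_self_of_odd_card hodd (hcenter.mp v.2) (congrArg Subtype.val h)
  · have := card_insert_le x T
    have := card_filter_le (insert x T) (· ∉ Set.center R)
    rw [card_subtype]
    omega

end CommutingGraph

/-- For odd `n` not divisible by `3`, `3 < γ(Γ(R)) < (n-1)/2`. -/
theorem stmt_12 (R : Type*) [NonUnitalRing R] [Fintype R] (n : ℕ)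
    (hcard : Fintype.card R = n) (hn : Odd n) (h3 : ¬ (3 ∣ n))
    (hnc : ∃ x y : R, x * y ≠ y * x)
    (hz : Set.center R = {0}) :
    3 < (commutingGraph R).dominationNumber ∧
      2 * (commutingGraph R).dominationNumber < n - 1 := by
  subst hcard
  obtain ⟨x, y, hxy⟩ := hnc
  have hx : x ∉ Set.center R := fun h => hxy (Semigroup.mem_center_iff.mp h y).symm
  refine ⟨(commutingGraph R).le_dominationNumber
    fun D hD => four_le_card_of_isDominatingSet hn h3 hx hD, ?_⟩
  obtain ⟨D, hD, hDcard⟩ := exists_isDominatingSet_two_mul_card_add_addOrderOf_le hn hz hx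
  have hγ := (commutingGraph R).dominationNumber_le hD
  have hx0 : x ≠ 0 := fun h => hx (h ▸ Set.zero_mem_center)
  have h5 := five_le_addOrderOf hn h3 hx0
  omega

end
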